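/- arXiv:1712.00485 — 3 statements merged into one kernel-verified Lean document; each statement's English description precedes it below -/
import Mathlib

section
/- Let m be a positive integer, let r be a real number with 0 < r < m, and let γ, δ, c_s > 0. Define γ_max(c_s) = δ^{r/m} c_s^{(m−r)/m} / s(r,m) where s(r,m) = (r/m)·(m/r − 1)^{(m−r)/m}. If 0 < γ < γ_max(c_s), then for every real ξ the Fourier symbol c_s + δ|ξ|^{2m} − γ|ξ|^{2r} of the operator c_s + 𝓛 is strictly positive; in particular the operator c_s + 𝓛 used in the Petviashvili iteration is invertible. -/
/-!
Put `p = r/m` and `x = |ξ|^{2m}`, so that `|ξ|^{2r} = x^p`. Weighted AM-GM with weights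
`p, 1 - p` gives `δ^p c_s^{1-p} x^p ≤ p^p (1-p)^{1-p} (δ x + c_s)`, and `s(r,m)` is exactly
`p^p (1-p)^{1-p}`; hence `γ_max x^p ≤ c_s + δ x`, which is strict for `γ < γ_max` when `x > 0`.
-/

open Real

theorem Real.rpow_mul_rpow_le_mul_add {p q u v : ℝ} (hp : 0 < p) (hq : 0 < q) (hpq : p + q = 1)
    (hu : 0 ≤ u) (hv : 0 ≤ v) : u ^ p * v ^ q ≤ p ^ p * q ^ q * (u + v) := by
  have amgm := geom_mean_le_arith_mean2_weighted hp.le hq.le (div_nonneg hu hp.le)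
    (div_nonneg hv hq.le) hpq
  rw [div_rpow hu hp.le, div_rpow hv hq.le, mul_div_cancel₀ u hp.ne',
    mul_div_cancel₀ v hq.ne', div_mul_div_comm, div_le_iff₀ (by positivity)] at amgm
  linarith

theorem Real.mul_inv_sub_one_rpow_one_sub {p : ℝ} (hp0 : 0 < p) (hp1 : p < 1) :
    p * (p⁻¹ - 1) ^ (1 - p) = p ^ p * (1 - p) ^ (1 - p) := by
  have hq : p⁻¹ - 1 = (1 - p) / p := by field_simp
  rw [hq, div_rpow (by linarith) hp0.le]
  calc p * ((1 - p) ^ (1 - p) / p ^ (1 - p))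
      = p ^ (1 : ℝ) / p ^ (1 - p) * (1 - p) ^ (1 - p) := by rw [rpow_one]; ring
    _ = p ^ p * (1 - p) ^ (1 - p) := by rw [← rpow_sub hp0, sub_sub_cancel]

theorem Real.add_mul_sub_mul_rpow_pos {p c δ γ x : ℝ} (hp0 : 0 < p) (hp1 : p < 1) (hc : 0 < c)
    (hδ : 0 ≤ δ) (hx : 0 ≤ x)
    (hγ : γ < δ ^ p * c ^ (1 - p) / (p ^ p * (1 - p) ^ (1 - p))) :
    0 < c + δ * x - γ * x ^ p := by
  rcases hx.eq_or_lt with rfl | hx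
  · simpa [zero_rpow hp0.ne'] using hc
  have hs : 0 < p ^ p * (1 - p) ^ (1 - p) := by
    have : 0 < 1 - p := by linarith
    positivity
  have amgm := rpow_mul_rpow_le_mul_add hp0 (by linarith) (add_sub_cancel p 1)
    (mul_nonneg hδ hx.le) hc.le
  rw [mul_rpow hδ hx.le] at amgm
  suffices γ * x ^ p < c + δ * x by linarith
  calc γ * x ^ p < δ ^ p * c ^ (1 - p) / (p ^ p * (1 - p) ^ (1 - p)) * x ^ p :=
        mul_lt_mul_of_pos_right hγ (rpow_pos_of_pos hx p)
    _ ≤ c + δ * x := by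
        rw [div_mul_eq_mul_div, div_le_iff₀ hs]
        linarith

theorem stmt_2_general (m : ℕ) (r γ δ c_s : ℝ) (hr : 0 < r) (hrm : r < m)
    (hδ : 0 < δ) (hc : 0 < c_s)
    (hγmax : γ < δ ^ (r / (m : ℝ)) * c_s ^ (((m : ℝ) - r) / (m : ℝ)) /
      ((r / (m : ℝ)) * ((m : ℝ) / r - 1) ^ (((m : ℝ) - r) / (m : ℝ)))) :
    ∀ ξ : ℝ, 0 < c_s + δ * |ξ| ^ (2 * (m : ℝ)) - γ * |ξ| ^ (2 * r) := by
  intro ξ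
  have hm : (0 : ℝ) < m := hr.trans hrm
  set p := r / (m : ℝ) with hp
  have hp0 : 0 < p := div_pos hr hm
  have hp1 : p < 1 := (div_lt_one hm).2 hrm
  have hq : ((m : ℝ) - r) / m = 1 - p := by rw [hp, sub_div, div_self hm.ne']
  have hinv : (m : ℝ) / r = p⁻¹ := (inv_div r m).symm
  rw [hq, hinv, mul_inv_sub_one_rpow_one_sub hp0 hp1] at hγmax
  have hpow : (|ξ| ^ (2 * (m : ℝ))) ^ p = |ξ| ^ (2 * r) := by
    rw [← rpow_mul (abs_nonneg ξ), hp]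
    field_simp
  rw [← hpow]
  exact add_mul_sub_mul_rpow_pos hp0 hp1 hc hδ.le (rpow_nonneg (abs_nonneg ξ) _) hγmax

/-- For `0 < r < m`, `δ, c_s > 0` and `0 < γ < γ_max(c_s)`, the Fourier symbol
`c_s + δ|ξ|^{2m} − γ|ξ|^{2r}` of the operator `c_s + 𝓛` is strictly positive for all `ξ`. -/
theorem stmt_2 (m : ℕ) (hm : 0 < m) (r γ δ c_s : ℝ) (hr : 0 < r) (hrm : r < m)
    (hγ : 0 < γ) (hδ : 0 < δ) (hc : 0 < c_s)
    (hγmax : γ < δ ^ (r / (m : ℝ)) * c_s ^ (((m : ℝ) - r) / (m : ℝ)) /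
      ((r / (m : ℝ)) * ((m : ℝ) / r - 1) ^ (((m : ℝ) - r) / (m : ℝ)))) :
    ∀ ξ : ℝ, 0 < c_s + δ * |ξ| ^ (2 * (m : ℝ)) - γ * |ξ| ^ (2 * r) :=
  stmt_2_general m r γ δ c_s hr hrm hδ hc hγmax
end

section
/- Let m be a positive integer, let r be a real number with 0 < r < m, and let γ, δ, c_s > 0 with γ < γ_max(c_s) = δ^{r/m} c_s^{(m−r)/m} / s(r,m), where s(r,m) = (r/m)·(m/r − 1)^{(m−r)/m}. Define the linear dispersion relation ω(k) = −c_s k − k(δ|k|^{2m} − γ|k|^{2r}) for k ∈ ℝ. Then the phase speed v(k) = ω(k)/k satisfies v(k) < 0 for every k ≠ 0; i.e., every plane-wave component of small-amplitude solutions travels to the left relative to a reference frame moving with a solitary wave of speed c_s. -/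
/-!
Writing `t = |k|²`, the phase speed is `-(c_s + δ tᵐ - γ tʳ)`, so it suffices that
`γ tʳ < c_s + δ tᵐ` for `t > 0`. Weighted AM-GM with weights `p = r/m` and `1 - p` gives
`δᵖ c_s¹⁻ᵖ tʳ ≤ pᵖ (1-p)¹⁻ᵖ (δ tᵐ + c_s)`, and `pᵖ (1-p)¹⁻ᵖ` is exactly the denominator
`s(r,m)` of `γ_max`, so `γ < γ_max` makes the inequality strict.
-/

open Real

lemma rpow_mul_rpow_one_sub_le {p a b : ℝ} (hp₀ : 0 < p) (hp₁ : p < 1)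
    (ha : 0 ≤ a) (hb : 0 ≤ b) :
    a ^ p * b ^ (1 - p) ≤ p ^ p * (1 - p) ^ (1 - p) * (a + b) := by
  have hq : 0 < 1 - p := sub_pos.mpr hp₁
  have hamgm := geom_mean_le_arith_mean2_weighted hp₀.le hq.le
    (div_nonneg ha hp₀.le) (div_nonneg hb hq.le) (add_sub_cancel p 1)
  rw [div_rpow ha hp₀.le, div_rpow hb hq.le, mul_div_cancel₀ a hp₀.ne',
    mul_div_cancel₀ b hq.ne', div_mul_div_comm, div_le_iff₀ (by positivity)] at hamgm
  linarith

lemma div_mul_rpow_sub_one_rpow {r M : ℝ} (hr : 0 < r) (hrM : r < M) :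
    r / M * (M / r - 1) ^ ((M - r) / M) = (r / M) ^ (r / M) * (1 - r / M) ^ (1 - r / M) := by
  have hM : 0 < M := hr.trans hrM
  have hp : 0 < r / M := div_pos hr hM
  have hq : 0 < 1 - r / M := by rw [sub_pos, div_lt_one hM]; exact hrM
  have hsub : (M - r) / M = 1 - r / M := by field_simp
  have hratio : M / r - 1 = (1 - r / M) / (r / M) := by field_simp
  rw [hsub, hratio, div_rpow hq.le hp.le, mul_div_left_comm, rpow_sub hp, rpow_one,
    div_div_cancel₀ hp.ne']
  ring

lemma mul_rpow_lt_add_mul_rpow {r M γ δ c t : ℝ} (hr : 0 < r) (hrM : r < M)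
    (hδ : 0 ≤ δ) (hc : 0 ≤ c) (ht : 0 < t)
    (hγ : γ < δ ^ (r / M) * c ^ ((M - r) / M) / (r / M * (M / r - 1) ^ ((M - r) / M))) :
    γ * t ^ r < c + δ * t ^ M := by
  have hM : 0 < M := hr.trans hrM
  have hp : 0 < r / M := div_pos hr hM
  have hp₁ : r / M < 1 := (div_lt_one hM).mpr hrM
  have hsub : (M - r) / M = 1 - r / M := by field_simp
  rw [div_mul_rpow_sub_one_rpow hr hrM, hsub, lt_div_iff₀ (by positivity)] at hγ
  have hyoung := rpow_mul_rpow_one_sub_le hp hp₁ (by positivity : 0 ≤ δ * t ^ M) hc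
  have htM : (t ^ M) ^ (r / M) = t ^ r := by
    rw [← rpow_mul ht.le, mul_div_cancel₀ r hM.ne']
  rw [mul_rpow hδ (by positivity), htM] at hyoung
  set D := (r / M) ^ (r / M) * (1 - r / M) ^ (1 - r / M)
  have hD : 0 < D := by
    have : 0 < 1 - r / M := sub_pos.mpr hp₁
    positivity
  refine lt_of_mul_lt_mul_left ?_ hD.le
  calc D * (γ * t ^ r) = γ * D * t ^ r := by ring
    _ < δ ^ (r / M) * c ^ (1 - r / M) * t ^ r :=
      mul_lt_mul_of_pos_right hγ (rpow_pos_of_pos ht r)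
    _ = δ ^ (r / M) * t ^ r * c ^ (1 - r / M) := by ring
    _ ≤ D * (δ * t ^ M + c) := hyoung
    _ = D * (c + δ * t ^ M) := by ring

theorem stmt_3_general (m : ℕ) (r γ δ c_s : ℝ) (hr : 0 < r) (hrm : r < m)
    (hδ : 0 < δ) (hc : 0 < c_s)
    (hγmax : γ < δ ^ (r / (m : ℝ)) * c_s ^ (((m : ℝ) - r) / (m : ℝ)) /
      ((r / (m : ℝ)) * ((m : ℝ) / r - 1) ^ (((m : ℝ) - r) / (m : ℝ)))) :
    ∀ k : ℝ, k ≠ 0 →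
      (-c_s * k - k * (δ * |k| ^ (2 * (m : ℝ)) - γ * |k| ^ (2 * r))) / k < 0 := by
  intro k hk
  have hkey := mul_rpow_lt_add_mul_rpow hr hrm hδ.le hc.le
    (by positivity : 0 < |k| ^ (2 : ℝ)) hγmax
  rw [← rpow_mul (abs_nonneg k), ← rpow_mul (abs_nonneg k)] at hkey
  have hspeed : (-c_s * k - k * (δ * |k| ^ (2 * (m : ℝ)) - γ * |k| ^ (2 * r))) / k
      = -(c_s + δ * |k| ^ (2 * (m : ℝ)) - γ * |k| ^ (2 * r)) := by
    field_simp
    ring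
  rw [hspeed]
  linarith

/-- For `0 < r < m`, `γ, δ, c_s > 0` with `γ < γ_max(c_s)`, the phase speed
`v(k) = ω(k)/k` of the linearized generalized Benjamin equation in the frame moving with
the solitary wave, where `ω(k) = −c_s k − k(δ|k|^{2m} − γ|k|^{2r})`, is negative for all
`k ≠ 0`. -/
theorem stmt_3 (m : ℕ) (hm : 0 < m) (r γ δ c_s : ℝ) (hr : 0 < r) (hrm : r < m)
    (hγ : 0 < γ) (hδ : 0 < δ) (hc : 0 < c_s)
    (hγmax : γ < δ ^ (r / (m : ℝ)) * c_s ^ (((m : ℝ) - r) / (m : ℝ)) /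
      ((r / (m : ℝ)) * ((m : ℝ) / r - 1) ^ (((m : ℝ) - r) / (m : ℝ)))) :
    ∀ k : ℝ, k ≠ 0 →
      (-c_s * k - k * (δ * |k| ^ (2 * (m : ℝ)) - γ * |k| ^ (2 * r))) / k < 0 :=
  stmt_3_general m r γ δ c_s hr hrm hδ hc hγmax
end

section
/- Let m be a positive integer, let r be a real number with 0 < r < m, and let δ, c_s > 0. Define ψ(x) = (2r+1)γ x^r − (2m+1)δ x^m for x > 0 and γ* = ( c_s / ( (2r+1)(1 − r/m) (r(2r+1)/(m(2m+1)δ))^{r/(m−r)} ) )^{(m−r)/m}. Then for γ > 0 the strict inequality ψ(x) < c_s holds for every x > 0 if and only if γ < γ*; moreover, when γ = γ* the maximum value of ψ over (0,∞) equals exactly c_s. -/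
/-!
For `a, b > 0` and `0 < r < s`, the function `f x = a x^r - b x^s` on `(0, ∞)` has its critical
point at `x₀ = (r a / (s b))^(1/(s-r))`, where `b x₀^s = (r/s) a x₀^r`. Writing `x = x₀ t`, the
bound `f x ≤ f x₀ = (1 - r/s) a x₀^r` is Bernoulli's inequality `u^(r/s) ≤ 1 + (r/s)(u - 1)` for
`u = t^s`. The maximum is homogeneous of degree `s / (s - r)` in `a`; with `a = (2r+1)γ` and
`s = m` it is `K γ^(m/(m-r))`, a strictly increasing function of `γ` which equals `c_s`
exactly at `γ*`.
-/

open Real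

noncomputable def powerGapArgmax (a b r s : ℝ) : ℝ := (r * a / (s * b)) ^ (s - r)⁻¹

noncomputable def powerGapMax (a b r s : ℝ) : ℝ :=
  a * (1 - r / s) * (r * a / (s * b)) ^ (r / (s - r))

lemma rpow_le_one_add_mul_sub_one {u p : ℝ} (hu : 0 ≤ u) (hp0 : 0 ≤ p) (hp1 : p ≤ 1) :
    u ^ p ≤ 1 + p * (u - 1) := by
  simpa using rpow_one_add_le_one_add_mul_self (s := u - 1) (by linarith) hp0 hp1

section PowerGap

variable {a b r s : ℝ}

lemma powerGapArgmax_pos (ha : 0 < a) (hb : 0 < b) (hr : 0 < r) (hrs : r < s) :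
    0 < powerGapArgmax a b r s :=
  rpow_pos_of_pos (div_pos (mul_pos hr ha) (mul_pos (hr.trans hrs) hb)) _

lemma powerGapArgmax_rpow (ha : 0 < a) (hb : 0 < b) (hr : 0 < r) (hrs : r < s) (t : ℝ) :
    powerGapArgmax a b r s ^ t = (r * a / (s * b)) ^ (t / (s - r)) := by
  rw [powerGapArgmax, ← rpow_mul (div_pos (mul_pos hr ha) (mul_pos (hr.trans hrs) hb)).le,
    inv_mul_eq_div]

lemma powerGapMax_eq (ha : 0 < a) (hb : 0 < b) (hr : 0 < r) (hrs : r < s) :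
    powerGapMax a b r s = a * (1 - r / s) * powerGapArgmax a b r s ^ r := by
  rw [powerGapMax, powerGapArgmax_rpow ha hb hr hrs]

-- The critical-point equation `f' x₀ = 0`, multiplied by `x₀ / s`.
lemma mul_powerGapArgmax_rpow (ha : 0 < a) (hb : 0 < b) (hr : 0 < r) (hrs : r < s) :
    b * powerGapArgmax a b r s ^ s = r / s * a * powerGapArgmax a b r s ^ r := by
  have hsr : s - r ≠ 0 := (sub_pos.2 hrs).ne'
  have hx₀ := powerGapArgmax_pos ha hb hr hrs
  have hsplit : powerGapArgmax a b r s ^ s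
      = powerGapArgmax a b r s ^ (s - r) * powerGapArgmax a b r s ^ r := by
    rw [← rpow_add hx₀, sub_add_cancel]
  rw [hsplit, powerGapArgmax_rpow ha hb hr hrs (s - r), div_self hsr, rpow_one]
  field_simp

lemma sub_rpow_le_powerGapMax (ha : 0 < a) (hb : 0 < b) (hr : 0 < r) (hrs : r < s) {x : ℝ}
    (hx : 0 < x) : a * x ^ r - b * x ^ s ≤ powerGapMax a b r s := by
  set x₀ := powerGapArgmax a b r s
  have hs : 0 < s := hr.trans hrs
  have hx₀ : 0 < x₀ := powerGapArgmax_pos ha hb hr hrs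
  have ht : 0 ≤ x / x₀ := (div_pos hx hx₀).le
  have hbern : (x / x₀) ^ r ≤ 1 + r / s * ((x / x₀) ^ s - 1) := by
    have := rpow_le_one_add_mul_sub_one (rpow_nonneg ht s) (div_nonneg hr.le hs.le)
      (div_le_one_of_le₀ hrs.le hs.le)
    rwa [← rpow_mul ht, mul_div_cancel₀ _ hs.ne'] at this
  have hscale (t : ℝ) : x ^ t = x₀ ^ t * (x / x₀) ^ t := by
    rw [div_rpow hx.le hx₀.le, mul_div_cancel₀ _ (rpow_pos_of_pos hx₀ t).ne']
  have hcrit := mul_powerGapArgmax_rpow ha hb hr hrs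
  have hax₀ : 0 < a * x₀ ^ r := mul_pos ha (rpow_pos_of_pos hx₀ r)
  calc a * x ^ r - b * x ^ s
      = a * x₀ ^ r * ((x / x₀) ^ r - r / s * (x / x₀) ^ s) := by
        rw [hscale r, hscale s, ← mul_assoc b, hcrit]; ring
    _ ≤ a * x₀ ^ r * (1 - r / s) := mul_le_mul_of_nonneg_left (by linarith) hax₀.le
    _ = powerGapMax a b r s := by rw [powerGapMax_eq ha hb hr hrs]; ring

lemma sub_rpow_powerGapArgmax (ha : 0 < a) (hb : 0 < b) (hr : 0 < r) (hrs : r < s) :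
    a * powerGapArgmax a b r s ^ r - b * powerGapArgmax a b r s ^ s = powerGapMax a b r s := by
  rw [mul_powerGapArgmax_rpow ha hb hr hrs, powerGapMax_eq ha hb hr hrs]
  ring

lemma powerGapMax_pos (ha : 0 < a) (hb : 0 < b) (hr : 0 < r) (hrs : r < s) :
    0 < powerGapMax a b r s := by
  have hs : 0 < s := hr.trans hrs
  rw [powerGapMax_eq ha hb hr hrs]
  have : 0 < 1 - r / s := sub_pos.2 ((div_lt_one hs).2 hrs)
  have := rpow_pos_of_pos (powerGapArgmax_pos ha hb hr hrs) r
  positivity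

lemma powerGapMax_mul_right (ha : 0 ≤ a) (hb : 0 < b) (hr : 0 < r) (hrs : r < s) {γ : ℝ}
    (hγ : 0 < γ) : powerGapMax (a * γ) b r s = powerGapMax a b r s * γ ^ (s / (s - r)) := by
  have hs : 0 < s := hr.trans hrs
  have hsr : s - r ≠ 0 := (sub_pos.2 hrs).ne'
  rw [powerGapMax, powerGapMax, show r * (a * γ) / (s * b) = r * a / (s * b) * γ by ring,
    mul_rpow (by positivity) hγ.le, show s / (s - r) = 1 + r / (s - r) by field_simp; ring,
    rpow_add hγ, rpow_one]
  ring

end PowerGap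

theorem stmt_6_general (m : ℕ) (r δ c_s : ℝ) (hr : 0 < r) (hrm : r < m)
    (hδ : 0 < δ) (hc : 0 < c_s) :
    let γstar : ℝ := (c_s / ((2 * r + 1) * (1 - r / m) *
      (r * (2 * r + 1) / ((m : ℝ) * (2 * (m : ℝ) + 1) * δ)) ^ (r / ((m : ℝ) - r)))) ^
        (((m : ℝ) - r) / (m : ℝ))
    (∀ γ : ℝ, 0 < γ →
      ((∀ x : ℝ, 0 < x →
          (2 * r + 1) * γ * x ^ r - (2 * (m : ℝ) + 1) * δ * x ^ (m : ℝ) < c_s) ↔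
        γ < γstar)) ∧
    (∀ x : ℝ, 0 < x →
      (2 * r + 1) * γstar * x ^ r - (2 * (m : ℝ) + 1) * δ * x ^ (m : ℝ) ≤ c_s) ∧
    (∃ x : ℝ, 0 < x ∧
      (2 * r + 1) * γstar * x ^ r - (2 * (m : ℝ) + 1) * δ * x ^ (m : ℝ) = c_s) := by
  intro γstar
  have hA : (0 : ℝ) < 2 * r + 1 := by linarith
  have hB : 0 < (2 * (m : ℝ) + 1) * δ := mul_pos (by linarith) hδ
  set K := powerGapMax (2 * r + 1) ((2 * (m : ℝ) + 1) * δ) r m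
  set α : ℝ := m / (m - r)
  have hα : 0 < α := div_pos (hr.trans hrm) (sub_pos.2 hrm)
  have hK : 0 < K := powerGapMax_pos hA hB hr hrm
  have hγstar : γstar = (c_s / K) ^ α⁻¹ := by
    simp only [γstar, K, α, powerGapMax, inv_div, mul_assoc]
  have hγstar_pos : 0 < γstar := hγstar ▸ rpow_pos_of_pos (div_pos hc hK) _
  have hKγstar : K * γstar ^ α = c_s := by
    rw [hγstar, rpow_inv_rpow (div_pos hc hK).le hα.ne', mul_div_cancel₀ _ hK.ne']
  have hmax (γ : ℝ) (hγ : 0 < γ) :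
      powerGapMax ((2 * r + 1) * γ) ((2 * (m : ℝ) + 1) * δ) r m = K * γ ^ α :=
    powerGapMax_mul_right hA.le hB hr hrm hγ
  have hle (γ : ℝ) (hγ : 0 < γ) (x : ℝ) (hx : 0 < x) :
      (2 * r + 1) * γ * x ^ r - (2 * (m : ℝ) + 1) * δ * x ^ (m : ℝ) ≤ K * γ ^ α :=
    hmax γ hγ ▸ sub_rpow_le_powerGapMax (by positivity) hB hr hrm hx
  have hattained (γ : ℝ) (hγ : 0 < γ) : ∃ x : ℝ, 0 < x ∧
      (2 * r + 1) * γ * x ^ r - (2 * (m : ℝ) + 1) * δ * x ^ (m : ℝ) = K * γ ^ α :=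
    ⟨_, powerGapArgmax_pos (by positivity) hB hr hrm,
      hmax γ hγ ▸ sub_rpow_powerGapArgmax (by positivity) hB hr hrm⟩
  have hthreshold (γ : ℝ) (hγ : 0 < γ) : K * γ ^ α < c_s ↔ γ < γstar := by
    rw [← hKγstar, mul_lt_mul_iff_right₀ hK, rpow_lt_rpow_iff hγ.le hγstar_pos.le hα]
  refine ⟨fun γ hγ => ⟨fun h => ?_, fun h x hx => ?_⟩,
    fun x hx => hKγstar ▸ hle γstar hγstar_pos x hx, ?_⟩
  · obtain ⟨x, hx, hx_eq⟩ := hattained γ hγ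
    exact (hthreshold γ hγ).1 (hx_eq ▸ h x hx)
  · exact (hle γ hγ x hx).trans_lt ((hthreshold γ hγ).2 h)
  · obtain ⟨x, hx, hx_eq⟩ := hattained γstar hγstar_pos
    exact ⟨x, hx, hx_eq.trans hKγstar⟩

/-- For `0 < r < m`, `δ, c_s > 0`, with `ψ(x) = (2r+1)γ x^r − (2m+1)δ x^m` and
`γ* = (c_s / ((2r+1)(1 − r/m)(r(2r+1)/(m(2m+1)δ))^{r/(m−r)}))^{(m−r)/m}`:
for `γ > 0` one has `ψ(x) < c_s` for all `x > 0` iff `γ < γ*`, and when `γ = γ*` the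
maximum of `ψ` over `(0,∞)` equals exactly `c_s`. -/
theorem stmt_6 (m : ℕ) (hm : 0 < m) (r δ c_s : ℝ) (hr : 0 < r) (hrm : r < m)
    (hδ : 0 < δ) (hc : 0 < c_s) :
    let γstar : ℝ := (c_s / ((2 * r + 1) * (1 - r / m) *
      (r * (2 * r + 1) / ((m : ℝ) * (2 * (m : ℝ) + 1) * δ)) ^ (r / ((m : ℝ) - r)))) ^
        (((m : ℝ) - r) / (m : ℝ))
    (∀ γ : ℝ, 0 < γ →
      ((∀ x : ℝ, 0 < x →
          (2 * r + 1) * γ * x ^ r - (2 * (m : ℝ) + 1) * δ * x ^ (m : ℝ) < c_s) ↔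
        γ < γstar)) ∧
    (∀ x : ℝ, 0 < x →
      (2 * r + 1) * γstar * x ^ r - (2 * (m : ℝ) + 1) * δ * x ^ (m : ℝ) ≤ c_s) ∧
    (∃ x : ℝ, 0 < x ∧
      (2 * r + 1) * γstar * x ^ r - (2 * (m : ℝ) + 1) * δ * x ^ (m : ℝ) = c_s) :=
  stmt_6_general m r δ c_s hr hrm hδ hc
end
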